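/- arXiv:1603.03269 — 2 statements merged into one kernel-verified Lean document; each statement's English description precedes it below -/
import Mathlib

section
/- Let Q = (1,2,...,4n) be the standard 4n-cycle in the symmetric group Σ_{4n} and let τ = (1,3,...,2n-1)(2,4,...,2n)(4n-1,4n-3,...,2n+1)(4n,4n-2,...,2n+2). Then Q^{2n} and τ anticommute, i.e., (Q^{2n} τ)^2 = 1, equivalently Q^{2n} τ Q^{2n} = τ^{-1}. -/
/-- The permutation `τ` on labels `{1,…,4n}` (represented as `ZMod (4n)`, with label
`4n` represented by `0`): it cycles `(1,3,…,2n-1)`, `(2,4,…,2n)` forward and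
`(4n-1,4n-3,…,2n+1)`, `(4n,4n-2,…,2n+2)` backward. -/
def tauFun (n : ℕ) (x : ZMod (4 * n)) : ZMod (4 * n) :=
  if x = ((2 * n - 1 : ℕ) : ZMod (4 * n)) ∨ x = ((2 * n : ℕ) : ZMod (4 * n)) then
    x + 2 - (2 * n : ℕ)
  else if x = ((2 * n + 1 : ℕ) : ZMod (4 * n)) ∨ x = ((2 * n + 2 : ℕ) : ZMod (4 * n)) then
    x - 2 + (2 * n : ℕ)
  else if 1 ≤ x.val ∧ x.val ≤ 2 * n then x + 2
  else x - 2

/-- additive constant of `tauFun` as a natural number -/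
def tauC (n k : ℕ) : ℕ :=
  if k = 2 * n - 1 ∨ k = 2 * n then 2 * n + 2
  else if k = 2 * n + 1 ∨ k = 2 * n + 2 then 6 * n - 2
  else if 1 ≤ k ∧ k ≤ 2 * n then 2
  else 4 * n - 2

lemma zmod_eq_cast_iff {N : ℕ} [NeZero N] (x : ZMod N) (m : ℕ) :
    x = (m : ZMod N) ↔ x.val = m % N := by
  rw [← ZMod.val_natCast]
  exact ⟨fun h => h ▸ rfl, fun h => ZMod.val_injective N h⟩

lemma tauFun_eq (n : ℕ) (hn : 2 ≤ n) (y : ZMod (4 * n)) :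
    tauFun n y = y + ((tauC n y.val : ℕ) : ZMod (4 * n)) := by
  haveI : NeZero (4 * n) := ⟨by omega⟩
  have h4 : ((4 * n : ℕ) : ZMod (4 * n)) = 0 := ZMod.natCast_self _
  have e1 : (2 * n - 1) % (4 * n) = 2 * n - 1 := Nat.mod_eq_of_lt (by omega)
  have e2 : (2 * n) % (4 * n) = 2 * n := Nat.mod_eq_of_lt (by omega)
  have e3 : (2 * n + 1) % (4 * n) = 2 * n + 1 := Nat.mod_eq_of_lt (by omega)
  have e4 : (2 * n + 2) % (4 * n) = 2 * n + 2 := Nat.mod_eq_of_lt (by omega)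
  simp only [tauFun, tauC, zmod_eq_cast_iff, e1, e2, e3, e4]
  split_ifs with h1 h2 h3
  · push_cast at h4 ⊢
    linear_combination -h4
  · rw [Nat.cast_sub (by omega : 2 ≤ 6 * n)]
    push_cast at h4 ⊢
    linear_combination -h4
  · norm_num
  · rw [Nat.cast_sub (by omega : 2 ≤ 4 * n)]
    push_cast at h4 ⊢
    linear_combination -h4

lemma val_add_cast {N : ℕ} [NeZero N] (x : ZMod N) (m : ℕ) :
    (x + (m : ZMod N)).val = (x.val + m) % N := by
  rw [ZMod.val_add, ZMod.val_natCast, Nat.add_mod_mod]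

lemma modred (n a : ℕ) (h : a < 12 * n) :
    a % (4 * n) = if a < 4 * n then a else if a < 8 * n then a - 4 * n else a - 8 * n := by
  split_ifs with h1 h2
  · exact Nat.mod_eq_of_lt h1
  · rw [Nat.mod_eq_sub_mod (by omega), Nat.mod_eq_of_lt (by omega)]
  · rw [Nat.mod_eq_sub_mod (by omega), Nat.mod_eq_sub_mod (by omega),
      Nat.mod_eq_of_lt (by omega)]
    omega

lemma shuffle (N : ℕ) (x : ZMod N) (a b : ℕ) :
    x + (a : ZMod N) + (b : ZMod N) + (a : ZMod N) = x + ((a + b + a : ℕ) : ZMod N) := by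
  push_cast; ring

lemma kill (N : ℕ) (x : ZMod N) (a b : ℕ) (h : N ∣ a + b) :
    x + (a : ZMod N) + (b : ZMod N) = x := by
  rw [add_assoc, ← Nat.cast_add, (ZMod.natCast_eq_zero_iff _ _).mpr h, add_zero]

lemma key (n : ℕ) (hn : 1 ≤ n) :
    ∀ x : ZMod (4 * n),
      tauFun n (tauFun n (x + ((2 * n : ℕ) : ZMod (4 * n))) + ((2 * n : ℕ) : ZMod (4 * n))) = x := by
  by_cases h1 : n = 1
  · subst h1; decide
  · have h2n : 2 ≤ n := by omega
    haveI : NeZero (4 * n) := ⟨by omega⟩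
    intro x
    have hk := ZMod.val_lt x
    simp only [tauFun_eq n h2n]
    rw [val_add_cast x (2 * n), modred n _ (by omega)]
    split_ifs with ha hb
    all_goals rw [tauC]
    all_goals split_ifs
    all_goals rw [shuffle]
    all_goals rw [val_add_cast x _, modred n _ (by omega)]
    all_goals split_ifs
    all_goals rw [tauC]
    all_goals split_ifs
    all_goals first
      | (exfalso; omega)
      | exact kill (4 * n) x _ _ ⟨2, by omega⟩
      | exact kill (4 * n) x _ _ ⟨3, by omega⟩

/-- `Q^{2n}` and `τ` anticommute: `(Q^{2n} τ)^2 = 1`, equivalently `Q^{2n} τ Q^{2n} = τ⁻¹`. -/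
theorem Q_pow_tau_anticommute (n : ℕ) (hn : 1 ≤ n)
    (Q τ : Equiv.Perm (ZMod (4 * n)))
    (hQ : ∀ x, Q x = x + 1) (hτ : ∀ x, τ x = tauFun n x) :
    (Q ^ (2 * n) * τ) ^ 2 = 1 ∧ Q ^ (2 * n) * τ * Q ^ (2 * n) = τ⁻¹ := by
  have hQm : ∀ (m : ℕ) (x : ZMod (4 * n)), (Q ^ m) x = x + (m : ZMod (4 * n)) := by
    intro m
    induction m with
    | zero => intro x; simp
    | succ m ih =>
      intro x
      rw [pow_succ, Equiv.Perm.mul_apply, hQ x, ih (x + 1)]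
      push_cast
      ring
  have hkey : τ * Q ^ (2 * n) * τ * Q ^ (2 * n) = 1 := by
    ext x
    simp only [Equiv.Perm.mul_apply, Equiv.Perm.one_apply, hQm, hτ]
    exact key n hn x
  have h2 : Q ^ (2 * n) * τ * Q ^ (2 * n) = τ⁻¹ := by
    have h := congrArg (fun g => τ⁻¹ * g) hkey
    simpa [mul_assoc] using h
  refine ⟨?_, h2⟩
  rw [sq, ← mul_assoc, h2, inv_mul_cancel]
end

section
/- Let σ ∈ Σ_{4n} satisfy the equation σ Q^{2n} σ = τ, where Q and τ are as defined. Then (Q^{2n} σ)^4 = 1. -/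
private lemma castNe {M a b : ℕ} (ha : a < M) (hb : b < M) (h : a ≠ b) :
    (a : ZMod M) ≠ (b : ZMod M) := by
  intro hh
  have h2 := congrArg ZMod.val hh
  rw [ZMod.val_natCast_of_lt ha, ZMod.val_natCast_of_lt hb] at h2
  exact h h2

private lemma hmod (n b : ℕ) : ((b + 4 * n : ℕ) : ZMod (4 * n)) = (b : ZMod (4 * n)) := by
  rw [Nat.cast_add, ZMod.natCast_self, add_zero]

private lemma castEq_of_add (n a b : ℕ) (h : a = b ∨ a = b + 4 * n ∨ b = a + 4 * n) :
    ((a : ℕ) : ZMod (4 * n)) = (b : ZMod (4 * n)) := by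
  rcases h with rfl | rfl | rfl
  · rfl
  · exact hmod n b
  · exact (hmod n a).symm

private lemma tau_eval1 (n a : ℕ) (hn : 2 ≤ n) (ha : a = 2 * n - 1 ∨ a = 2 * n) :
    tauFun n (a : ZMod (4 * n)) = ((a + 2 - 2 * n : ℕ) : ZMod (4 * n)) := by
  unfold tauFun
  have hc : (a : ZMod (4 * n)) = ((2 * n - 1 : ℕ) : ZMod (4 * n)) ∨
      (a : ZMod (4 * n)) = ((2 * n : ℕ) : ZMod (4 * n)) := by
    rcases ha with rfl | rfl
    · exact Or.inl rfl
    · exact Or.inr rfl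
  rw [if_pos hc, Nat.cast_sub (by omega : 2 * n ≤ a + 2), Nat.cast_add]
  push_cast
  ring

private lemma tau_eval2 (n a : ℕ) (hn : 2 ≤ n) (ha : a = 2 * n + 1 ∨ a = 2 * n + 2) :
    tauFun n (a : ZMod (4 * n)) = ((a - 2 + 2 * n : ℕ) : ZMod (4 * n)) := by
  unfold tauFun
  have hA : ¬((a : ZMod (4 * n)) = ((2 * n - 1 : ℕ) : ZMod (4 * n)) ∨
      (a : ZMod (4 * n)) = ((2 * n : ℕ) : ZMod (4 * n))) := by
    rintro (h | h)
    · exact castNe (by omega) (by omega) (by omega) h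
    · exact castNe (by omega) (by omega) (by omega) h
  have hB : (a : ZMod (4 * n)) = ((2 * n + 1 : ℕ) : ZMod (4 * n)) ∨
      (a : ZMod (4 * n)) = ((2 * n + 2 : ℕ) : ZMod (4 * n)) := by
    rcases ha with rfl | rfl
    · exact Or.inl rfl
    · exact Or.inr rfl
  rw [if_neg hA, if_pos hB, Nat.cast_add, Nat.cast_sub (by omega : 2 ≤ a)]
  push_cast
  ring

private lemma tau_eval3 (n a : ℕ) (hn : 2 ≤ n) (h1 : 1 ≤ a) (h2 : a ≤ 2 * n - 2) :
    tauFun n (a : ZMod (4 * n)) = ((a + 2 : ℕ) : ZMod (4 * n)) := by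
  unfold tauFun
  have hA : ¬((a : ZMod (4 * n)) = ((2 * n - 1 : ℕ) : ZMod (4 * n)) ∨
      (a : ZMod (4 * n)) = ((2 * n : ℕ) : ZMod (4 * n))) := by
    rintro (h | h)
    · exact castNe (by omega) (by omega) (by omega) h
    · exact castNe (by omega) (by omega) (by omega) h
  have hB : ¬((a : ZMod (4 * n)) = ((2 * n + 1 : ℕ) : ZMod (4 * n)) ∨
      (a : ZMod (4 * n)) = ((2 * n + 2 : ℕ) : ZMod (4 * n))) := by
    rintro (h | h)
    · exact castNe (by omega) (by omega) (by omega) h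
    · exact castNe (by omega) (by omega) (by omega) h
  have hC : 1 ≤ ((a : ZMod (4 * n))).val ∧ ((a : ZMod (4 * n))).val ≤ 2 * n := by
    rw [ZMod.val_natCast_of_lt (by omega : a < 4 * n)]
    exact ⟨h1, by omega⟩
  rw [if_neg hA, if_neg hB, if_pos hC]
  push_cast
  ring

private lemma tau_eval4 (n a : ℕ) (hn : 2 ≤ n) (h1 : 2 * n + 3 ≤ a) (h2 : a ≤ 4 * n - 1) :
    tauFun n (a : ZMod (4 * n)) = ((a - 2 : ℕ) : ZMod (4 * n)) := by
  unfold tauFun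
  have hA : ¬((a : ZMod (4 * n)) = ((2 * n - 1 : ℕ) : ZMod (4 * n)) ∨
      (a : ZMod (4 * n)) = ((2 * n : ℕ) : ZMod (4 * n))) := by
    rintro (h | h)
    · exact castNe (by omega) (by omega) (by omega) h
    · exact castNe (by omega) (by omega) (by omega) h
  have hB : ¬((a : ZMod (4 * n)) = ((2 * n + 1 : ℕ) : ZMod (4 * n)) ∨
      (a : ZMod (4 * n)) = ((2 * n + 2 : ℕ) : ZMod (4 * n))) := by
    rintro (h | h)
    · exact castNe (by omega) (by omega) (by omega) h
    · exact castNe (by omega) (by omega) (by omega) h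
  have hC : ¬(1 ≤ ((a : ZMod (4 * n))).val ∧ ((a : ZMod (4 * n))).val ≤ 2 * n) := by
    rw [ZMod.val_natCast_of_lt (by omega : a < 4 * n)]
    omega
  rw [if_neg hA, if_neg hB, if_neg hC, Nat.cast_sub (by omega : 2 ≤ a)]
  push_cast
  ring

private lemma tau_eval0 (n : ℕ) (hn : 2 ≤ n) :
    tauFun n ((0 : ℕ) : ZMod (4 * n)) = ((4 * n - 2 : ℕ) : ZMod (4 * n)) := by
  unfold tauFun
  have hA : ¬(((0 : ℕ) : ZMod (4 * n)) = ((2 * n - 1 : ℕ) : ZMod (4 * n)) ∨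
      ((0 : ℕ) : ZMod (4 * n)) = ((2 * n : ℕ) : ZMod (4 * n))) := by
    rintro (h | h)
    · exact castNe (by omega) (by omega) (by omega) h
    · exact castNe (by omega) (by omega) (by omega) h
  have hB : ¬(((0 : ℕ) : ZMod (4 * n)) = ((2 * n + 1 : ℕ) : ZMod (4 * n)) ∨
      ((0 : ℕ) : ZMod (4 * n)) = ((2 * n + 2 : ℕ) : ZMod (4 * n))) := by
    rintro (h | h)
    · exact castNe (by omega) (by omega) (by omega) h
    · exact castNe (by omega) (by omega) (by omega) h
  have hC : ¬(1 ≤ (((0 : ℕ) : ZMod (4 * n))).val ∧ (((0 : ℕ) : ZMod (4 * n))).val ≤ 2 * n) := by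
    rw [ZMod.val_natCast_of_lt (by omega : 0 < 4 * n)]
    omega
  rw [if_neg hA, if_neg hB, if_neg hC, Nat.cast_sub (by omega : 2 ≤ 4 * n),
    ZMod.natCast_self]
  push_cast
  ring

private lemma tau_key (n : ℕ) (hn : 2 ≤ n) (x : ZMod (4 * n)) :
    tauFun n (tauFun n x + ((2 * n : ℕ) : ZMod (4 * n))) = x + ((2 * n : ℕ) : ZMod (4 * n)) := by
  haveI : NeZero (4 * n) := ⟨by omega⟩
  obtain ⟨k, hk, rfl⟩ : ∃ k, k < 4 * n ∧ ((k : ℕ) : ZMod (4 * n)) = x :=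
    ⟨x.val, ZMod.val_lt x, ZMod.natCast_zmod_val x⟩
  rcases (by omega : k = 0 ∨ (1 ≤ k ∧ k ≤ 2 * n - 3) ∨ k = 2 * n - 2 ∨ k = 2 * n - 1 ∨
      k = 2 * n ∨ k = 2 * n + 1 ∨ k = 2 * n + 2 ∨ (2 * n + 3 ≤ k ∧ k ≤ 4 * n - 1))
    with h | h | h | h | h | h | h | h
  · subst h
    rw [tau_eval0 n hn, ← Nat.cast_add, (by omega : 4 * n - 2 + 2 * n = 2 * n - 2 + 4 * n),
      hmod, tau_eval3 n (2 * n - 2) hn (by omega) le_rfl]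
    simp only [← Nat.cast_add]
    exact castEq_of_add n _ _ (by omega)
  · obtain ⟨h1, h2⟩ := h
    rw [tau_eval3 n k hn h1 (by omega), ← Nat.cast_add,
      tau_eval4 n (k + 2 + 2 * n) hn (by omega) (by omega)]
    simp only [← Nat.cast_add]
    exact castEq_of_add n _ _ (by omega)
  · subst h
    rw [tau_eval3 n (2 * n - 2) hn (by omega) le_rfl, ← Nat.cast_add,
      (by omega : 2 * n - 2 + 2 + 2 * n = 0 + 4 * n), hmod, tau_eval0 n hn]
    simp only [← Nat.cast_add]
    exact castEq_of_add n _ _ (by omega)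
  · subst h
    rw [tau_eval1 n (2 * n - 1) hn (Or.inl rfl), ← Nat.cast_add,
      tau_eval2 n (2 * n - 1 + 2 - 2 * n + 2 * n) hn (Or.inl (by omega))]
    simp only [← Nat.cast_add]
    exact castEq_of_add n _ _ (by omega)
  · subst h
    rw [tau_eval1 n (2 * n) hn (Or.inr rfl), ← Nat.cast_add,
      tau_eval2 n (2 * n + 2 - 2 * n + 2 * n) hn (Or.inr (by omega))]
    simp only [← Nat.cast_add]
    exact castEq_of_add n _ _ (by omega)
  · subst h
    rw [tau_eval2 n (2 * n + 1) hn (Or.inl rfl), ← Nat.cast_add,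
      (by omega : 2 * n + 1 - 2 + 2 * n + 2 * n = 2 * n - 1 + 4 * n), hmod,
      tau_eval1 n (2 * n - 1) hn (Or.inl rfl)]
    simp only [← Nat.cast_add]
    exact castEq_of_add n _ _ (by omega)
  · subst h
    rw [tau_eval2 n (2 * n + 2) hn (Or.inr rfl), ← Nat.cast_add,
      (by omega : 2 * n + 2 - 2 + 2 * n + 2 * n = 2 * n + 4 * n), hmod,
      tau_eval1 n (2 * n) hn (Or.inr rfl)]
    simp only [← Nat.cast_add]
    exact castEq_of_add n _ _ (by omega)
  · obtain ⟨h1, h2⟩ := h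
    rw [tau_eval4 n k hn h1 h2, ← Nat.cast_add,
      (by omega : k - 2 + 2 * n = k - 2 * n - 2 + 4 * n), hmod,
      tau_eval3 n (k - 2 * n - 2) hn (by omega) (by omega)]
    simp only [← Nat.cast_add]
    exact castEq_of_add n _ _ (by omega)

private lemma tau_key' (n : ℕ) (hn : 1 ≤ n) (x : ZMod (4 * n)) :
    tauFun n (tauFun n x + ((2 * n : ℕ) : ZMod (4 * n))) = x + ((2 * n : ℕ) : ZMod (4 * n)) := by
  rcases eq_or_lt_of_le hn with h | h
  · subst h
    revert x
    decide
  · exact tau_key n h x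

/-- If `σ` satisfies the filling-permutation equation `σ Q^{2n} σ = τ`, then
`(Q^{2n} σ)^4 = 1`. -/
theorem fourth_power_of_QN_sigma (n : ℕ) (hn : 1 ≤ n)
    (Q τ σ : Equiv.Perm (ZMod (4 * n)))
    (hQ : ∀ x, Q x = x + 1) (hτ : ∀ x, τ x = tauFun n x)
    (hσ : σ * Q ^ (2 * n) * σ = τ) :
    (Q ^ (2 * n) * σ) ^ 4 = 1 := by
  have hQpow : ∀ (k : ℕ) (x : ZMod (4 * n)), (Q ^ k) x = x + (k : ZMod (4 * n)) := by
    intro k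
    induction k with
    | zero => intro x; simp
    | succ k ih =>
      intro x
      rw [pow_succ, Equiv.Perm.mul_apply, hQ, ih]
      push_cast
      ring
  have hτQτ : τ * Q ^ (2 * n) * τ = Q ^ (2 * n) := by
    apply Equiv.ext
    intro x
    simp only [Equiv.Perm.mul_apply, hτ, hQpow]
    exact tau_key' n hn x
  have hQQ : Q ^ (2 * n) * Q ^ (2 * n) = 1 := by
    apply Equiv.ext
    intro x
    simp only [Equiv.Perm.mul_apply, hQpow, Equiv.Perm.coe_one, id_eq]
    rw [add_assoc, ← Nat.cast_add, (by omega : 2 * n + 2 * n = 4 * n),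
      ZMod.natCast_self, add_zero]
  calc (Q ^ (2 * n) * σ) ^ 4
      = Q ^ (2 * n) * (σ * Q ^ (2 * n) * σ) * (Q ^ (2 * n) * (σ * Q ^ (2 * n) * σ)) := by
        simp only [pow_succ, pow_zero, one_mul, mul_assoc]
    _ = Q ^ (2 * n) * τ * (Q ^ (2 * n) * τ) := by rw [hσ]
    _ = Q ^ (2 * n) * (τ * Q ^ (2 * n) * τ) := by simp only [mul_assoc]
    _ = Q ^ (2 * n) * Q ^ (2 * n) := by rw [hτQτ]
    _ = 1 := hQQ
end
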